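/- arXiv:1204.1940 — 3 statements merged into one kernel-verified Lean document; each statement's English description precedes it below -/
import Mathlib

section
/- Let H be a complex Hilbert space graded by a sequence (H_n)_{n∈ℕ} of pairwise orthogonal closed subspaces whose closed linear span is H, and let M and N be graded closed subspaces of H. Writing M_n = M ∩ H_n and N_n = N ∩ H_n, one has c(M,N) = sup_{n∈ℕ} c(M_n, N_n); equivalently, ‖P_M P_N − P_{M∩N}‖ = sup_{n∈ℕ} ‖P_{M_n} P_{N_n} − P_{M_n ∩ N_n}‖. -/
/-!
Write `T = P_M P_N - P_{M ∩ N}`. Since `M` and `N` are graded, so is `M ∩ N`, hence `T` commutes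
with every `P_{H_n}`, and `P_{M_n} P_{N_n} - P_{M_n ∩ N_n} = T P_{H_n}`. Each local cosine is thus
`‖T P_{H_n}‖ ≤ ‖T‖`. Conversely `T` maps each `H_n` into itself, so for a finite sum `x = ∑ x_n`
with `x_n ∈ H_n` Pythagoras gives `‖T x‖² = ∑ ‖T x_n‖² ≤ s² ‖x‖²` with `s = sup_n ‖T P_{H_n}‖`,
and such sums are dense.
-/

/-- The orthogonal projection onto a subspace `K` of a complex inner product space,
as a bounded operator on the whole space (junk value `0` if `K` does not admit an
orthogonal projection; for a closed subspace of a Hilbert space it is the genuine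
orthogonal projection). -/
noncomputable def proj {H : Type*} [NormedAddCommGroup H] [InnerProductSpace ℂ H]
    (K : Submodule ℂ H) : H →L[ℂ] H :=
  letI := Classical.propDecidable (Submodule.HasOrthogonalProjection K)
  if h : Submodule.HasOrthogonalProjection K then
    haveI := h
    K.subtypeL.comp (K.orthogonalProjectionOnto)
  else 0

/-- The cosine of the Friedrichs angle between two (closed) subspaces `M`, `N`:
`c(M,N) = ‖P_M P_N - P_{M ∩ N}‖`. -/
noncomputable def friedrichs {H : Type*} [NormedAddCommGroup H] [InnerProductSpace ℂ H]
    (M N : Submodule ℂ H) : ℝ :=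
  ‖proj M * proj N - proj (M ⊓ N)‖

open Submodule

section

variable {𝕜 E : Type*} [RCLike 𝕜] [NormedAddCommGroup E] [InnerProductSpace 𝕜 E]

namespace Submodule

theorem starProjection_mul_starProjection_eq_inf {K L : Submodule 𝕜 E}
    [K.HasOrthogonalProjection] [L.HasOrthogonalProjection] [(K ⊓ L).HasOrthogonalProjection]
    (h : Commute K.starProjection L.starProjection) :
    K.starProjection * L.starProjection = (K ⊓ L).starProjection := by
  ext x
  rw [mul_apply_eq_comp]
  refine (eq_starProjection_of_mem_orthogonal
    (mem_inf.2 ⟨starProjection_apply_mem K _, ?_⟩) ?_).symm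
  · rw [← mul_apply_eq_comp, h.eq, mul_apply_eq_comp]
    exact starProjection_apply_mem L _
  · refine (mem_orthogonal _ _).2 fun u hu => ?_
    rw [inner_sub_right, ← inner_starProjection_left_eq_right, starProjection_eq_self_iff.2 hu.1,
      ← inner_starProjection_left_eq_right, starProjection_eq_self_iff.2 hu.2, sub_self]

theorem apply_mem_of_commute_starProjection {K : Submodule 𝕜 E} [K.HasOrthogonalProjection]
    {T : E →L[𝕜] E} (h : Commute T K.starProjection) {x : E} (hx : x ∈ K) : T x ∈ K := by
  rw [← starProjection_eq_self_iff.2 hx, ← mul_apply_eq_comp, h.eq, mul_apply_eq_comp]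
  exact starProjection_apply_mem K _

theorem commute_starProjection_of_forall_mem {W U : Submodule 𝕜 E}
    [W.HasOrthogonalProjection] [U.HasOrthogonalProjection]
    (hW : ∀ x ∈ W, U.starProjection x ∈ W) : Commute W.starProjection U.starProjection := by
  ext x
  simp only [mul_apply_eq_comp]
  refine eq_starProjection_of_mem_orthogonal' (hW _ (starProjection_apply_mem W x))
    (z := U.starProjection (x - W.starProjection x)) ?_ (by rw [← map_add, add_sub_cancel])
  refine (mem_orthogonal _ _).2 fun w hw => ?_
  rw [← inner_starProjection_left_eq_right]
  exact inner_right_of_mem_orthogonal (hW w hw) (sub_starProjection_mem_orthogonal x)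

theorem commute_starProjection_inf {K L U : Submodule 𝕜 E}
    [K.HasOrthogonalProjection] [L.HasOrthogonalProjection] [(K ⊓ L).HasOrthogonalProjection]
    [U.HasOrthogonalProjection] (hK : Commute K.starProjection U.starProjection)
    (hL : Commute L.starProjection U.starProjection) :
    Commute (K ⊓ L).starProjection U.starProjection :=
  commute_starProjection_of_forall_mem fun _ hx =>
    ⟨apply_mem_of_commute_starProjection hK.symm hx.1,
      apply_mem_of_commute_starProjection hL.symm hx.2⟩

theorem hasOrthogonalProjection_of_isClosed [CompleteSpace E] {K : Submodule 𝕜 E}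
    (hK : IsClosed (K : Set E)) : K.HasOrthogonalProjection :=
  haveI := hK.completeSpace_coe
  inferInstance

end Submodule

namespace ContinuousLinearMap

theorem norm_apply_le_of_mem_iSup {ι : Type*} {V : ι → Submodule 𝕜 E}
    (hV : OrthogonalFamily 𝕜 (fun i => V i) fun i => (V i).subtypeₗᵢ) (T : E →L[𝕜] E) {s : ℝ}
    (hs : 0 ≤ s) (hTV : ∀ i, ∀ x ∈ V i, T x ∈ V i) (hTs : ∀ i, ∀ x ∈ V i, ‖T x‖ ≤ s * ‖x‖)
    {y : E} (hy : y ∈ ⨆ i, V i) : ‖T y‖ ≤ s * ‖y‖ := by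
  obtain ⟨f, hf, hfy⟩ := (mem_iSup_iff_exists_finsupp _ _).1 hy
  rw [Finsupp.sum] at hfy
  have hy2 : ‖y‖ ^ 2 = ∑ i ∈ f.support, ‖f i‖ ^ 2 :=
    hfy ▸ hV.norm_sum (fun i => ⟨f i, hf i⟩) f.support
  have hTy2 : ‖T y‖ ^ 2 = ∑ i ∈ f.support, ‖T (f i)‖ ^ 2 := by
    rw [← hfy, map_sum]
    exact hV.norm_sum (fun i => ⟨T (f i), hTV i _ (hf i)⟩) f.support
  refine (pow_le_pow_iff_left₀ (norm_nonneg _) (by positivity) two_ne_zero).1 ?_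
  calc ‖T y‖ ^ 2 = ∑ i ∈ f.support, ‖T (f i)‖ ^ 2 := hTy2
    _ ≤ ∑ i ∈ f.support, (s * ‖f i‖) ^ 2 := by
      gcongr with i
      exact hTs i _ (hf i)
    _ = (s * ‖y‖) ^ 2 := by simp only [mul_pow, hy2, Finset.mul_sum]

theorem opNorm_le_of_dense {F : Type*} [NormedAddCommGroup F] [NormedSpace 𝕜 F]
    {S : Submodule 𝕜 E} (hS : S.topologicalClosure = ⊤) (T : E →L[𝕜] F) {s : ℝ} (hs : 0 ≤ s)
    (h : ∀ y ∈ S, ‖T y‖ ≤ s * ‖y‖) : ‖T‖ ≤ s :=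
  T.opNorm_le_bound hs <| (dense_iff_topologicalClosure_eq_top.2 hS).induction h <|
    isClosed_le (by fun_prop) (by fun_prop)

theorem norm_eq_iSup_norm_mul_starProjection {ι : Type*} {V : ι → Submodule 𝕜 E}
    [∀ i, (V i).HasOrthogonalProjection]
    (hV : OrthogonalFamily 𝕜 (fun i => V i) fun i => (V i).subtypeₗᵢ)
    (hdense : (⨆ i, V i).topologicalClosure = ⊤) (T : E →L[𝕜] E)
    (hT : ∀ i, Commute T (V i).starProjection) : ‖T‖ = ⨆ i, ‖T * (V i).starProjection‖ := by
  have hle (i : ι) : ‖T * (V i).starProjection‖ ≤ ‖T‖ :=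
    (norm_mul_le _ _).trans (mul_le_of_le_one_right (norm_nonneg T) (starProjection_norm_le _))
  have hs : 0 ≤ ⨆ i, ‖T * (V i).starProjection‖ := Real.iSup_nonneg fun i => norm_nonneg _
  refine le_antisymm (opNorm_le_of_dense hdense T hs fun y hy => ?_)
    (Real.iSup_le hle (norm_nonneg T))
  refine norm_apply_le_of_mem_iSup hV T hs
    (fun i x hx => apply_mem_of_commute_starProjection (hT i) hx) (fun i x hx => ?_) hy
  calc ‖T x‖ = ‖(T * (V i).starProjection) x‖ := by
        rw [mul_apply_eq_comp, starProjection_eq_self_iff.2 hx]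
    _ ≤ ‖T * (V i).starProjection‖ * ‖x‖ := le_opNorm _ _
    _ ≤ (⨆ i, ‖T * (V i).starProjection‖) * ‖x‖ := by
        gcongr
        exact le_ciSup ⟨‖T‖, Set.forall_mem_range.2 hle⟩ i

end ContinuousLinearMap

end

section

variable {H : Type*} [NormedAddCommGroup H] [InnerProductSpace ℂ H]

theorem proj_eq_starProjection (K : Submodule ℂ H) [K.HasOrthogonalProjection] :
    proj K = K.starProjection :=
  dif_pos ‹_›

theorem isIdempotentElem_proj (K : Submodule ℂ H) : IsIdempotentElem (proj K) := by
  by_cases hK : K.HasOrthogonalProjection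
  · rw [proj_eq_starProjection]
    exact K.isIdempotentElem_starProjection
  · simp only [proj, dif_neg hK]
    exact IsIdempotentElem.zero

variable [CompleteSpace H] {K L U : Submodule ℂ H}

theorem proj_mul_proj_eq_proj_inf (hK : IsClosed (K : Set H)) (hL : IsClosed (L : Set H))
    (h : Commute (proj K) (proj L)) : proj K * proj L = proj (K ⊓ L) := by
  have := hasOrthogonalProjection_of_isClosed hK
  have := hasOrthogonalProjection_of_isClosed hL
  have := hasOrthogonalProjection_of_isClosed (K := K ⊓ L) (hK.inter hL)
  simp only [proj_eq_starProjection] at h ⊢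
  exact starProjection_mul_starProjection_eq_inf h

theorem commute_proj_inf (hK : IsClosed (K : Set H)) (hL : IsClosed (L : Set H))
    (hU : IsClosed (U : Set H)) (hKU : Commute (proj K) (proj U))
    (hLU : Commute (proj L) (proj U)) : Commute (proj (K ⊓ L)) (proj U) := by
  have := hasOrthogonalProjection_of_isClosed hK
  have := hasOrthogonalProjection_of_isClosed hL
  have := hasOrthogonalProjection_of_isClosed hU
  have := hasOrthogonalProjection_of_isClosed (K := K ⊓ L) (hK.inter hL)
  simp only [proj_eq_starProjection] at hKU hLU ⊢
  exact commute_starProjection_inf hKU hLU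

theorem friedrichs_inf_eq_norm_mul (hK : IsClosed (K : Set H)) (hL : IsClosed (L : Set H))
    (hU : IsClosed (U : Set H)) (hKU : Commute (proj K) (proj U))
    (hLU : Commute (proj L) (proj U)) :
    friedrichs (K ⊓ U) (L ⊓ U) = ‖(proj K * proj L - proj (K ⊓ L)) * proj U‖ := by
  rw [friedrichs, ← inf_inf_distrib_right, ← proj_mul_proj_eq_proj_inf hK hU hKU,
    ← proj_mul_proj_eq_proj_inf hL hU hLU,
    ← proj_mul_proj_eq_proj_inf (hK.inter hL) hU (commute_proj_inf hK hL hU hKU hLU), sub_mul]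
  congr 2
  rw [mul_assoc, ← mul_assoc (proj U), ← hLU.eq, mul_assoc, (isIdempotentElem_proj U).eq,
    mul_assoc]

end

theorem stmt1 {H : Type*} [NormedAddCommGroup H] [InnerProductSpace ℂ H] [CompleteSpace H]
    -- a grading of `H`: pairwise orthogonal closed subspaces with dense linear span
    (V : ℕ → Submodule ℂ H) (hVclosed : ∀ n, IsClosed ((V n : Set H)))
    (hVortho : ∀ m n, m ≠ n → ∀ x ∈ V m, ∀ y ∈ V n, (inner ℂ x y : ℂ) = 0)
    (hVdense : (⨆ n, V n).topologicalClosure = ⊤)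
    -- graded closed subspaces `M` and `N`
    (M N : Submodule ℂ H) (hM : IsClosed (M : Set H)) (hN : IsClosed (N : Set H))
    (hMgraded : ∀ n, proj M * proj (V n) = proj (V n) * proj M)
    (hNgraded : ∀ n, proj N * proj (V n) = proj (V n) * proj N) :
    friedrichs M N = ⨆ n, friedrichs (M ⊓ V n) (N ⊓ V n) := by
  have hV : OrthogonalFamily ℂ (fun n => V n) fun n => (V n).subtypeₗᵢ :=
    orthogonalFamily_iff_pairwise.2 fun m n hmn => isOrtho_iff_inner_eq.2 (hVortho m n hmn)
  have hT (n : ℕ) : Commute (proj M * proj N - proj (M ⊓ N)) (proj (V n)) :=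
    (Commute.mul_left (hMgraded n) (hNgraded n)).sub_left
      (commute_proj_inf hM hN (hVclosed n) (hMgraded n) (hNgraded n))
  have := fun n => hasOrthogonalProjection_of_isClosed (hVclosed n)
  simp only [friedrichs_inf_eq_norm_mul hM hN (hVclosed _) (hMgraded _) (hNgraded _),
    proj_eq_starProjection (V _)] at hT ⊢
  exact ContinuousLinearMap.norm_eq_iSup_norm_mul_starProjection hV hVdense _ hT
end

section
/- Let 𝔄 be a unital C*-algebra and let a, b ∈ 𝔄 be commuting self-adjoint elements with a ≤ b. If f is a continuous real-valued function on σ(a) ∪ σ(b) that is monotone increasing on σ(a) ∪ σ(b), then f(a) ≤ f(b), where f(a) and f(b) are formed via the continuous functional calculus. -/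
/-!
Since `a` and `b` are commuting self-adjoint elements, `c = a + I • b` is normal with real part `a`
and imaginary part `b`, so `f(a)` and `f(b)` are `f ∘ re` and `f ∘ im` applied to `c` in the
continuous functional calculus of `c`. Then `a ≤ b` says `re z ≤ im z` on `σ(c)`, and
monotonicity gives `f (re z) ≤ f (im z)` there, because `re` and `im` map `σ(c)` onto `σ(a)` and
`σ(b)`.
-/
section

open ComplexStarModule Complex Set
open scoped ComplexOrder

section

variable {A : Type*} [AddCommGroup A] [Module ℂ A] [StarAddMonoid A] [StarModule ℂ A]

lemma realPart_add_I_smul {a b : A} (ha : IsSelfAdjoint a) (hb : IsSelfAdjoint b) :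
    (ℜ (a + I • b) : A) = a := by
  simp [ha.coe_realPart, hb.imaginaryPart]

lemma imaginaryPart_add_I_smul {a b : A} (ha : IsSelfAdjoint a) (hb : IsSelfAdjoint b) :
    (ℑ (a + I • b) : A) = b := by
  simp [ha.imaginaryPart, hb.coe_realPart]

end

lemma IsSelfAdjoint.isStarNormal_add_I_smul {A : Type*} [NonUnitalRing A] [StarRing A] [Module ℂ A]
    [IsScalarTower ℂ A A] [SMulCommClass ℂ A A] [StarModule ℂ A] {a b : A}
    (ha : IsSelfAdjoint a) (hb : IsSelfAdjoint b) (hab : Commute a b) :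
    IsStarNormal (a + I • b) := by
  rw [isStarNormal_iff_commute_realPart_imaginaryPart, realPart_add_I_smul ha hb,
    imaginaryPart_add_I_smul ha hb]
  exact hab

variable {A : Type*} [CStarAlgebra A] [PartialOrder A] [StarOrderedRing A]

lemma re_le_im_of_realPart_le_imaginaryPart {c : A} [IsStarNormal c] (h : (ℜ c : A) ≤ ℑ c)
    {z : ℂ} (hz : z ∈ spectrum ℂ c) : z.re ≤ z.im := by
  rw [← cfc_re_id c, ← cfc_im_id c] at h
  exact_mod_cast (cfc_le_iff _ _ c).mp h z hz

lemma cfc_realPart_le_cfc_imaginaryPart {c : A} [IsStarNormal c] (h : (ℜ c : A) ≤ ℑ c)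
    (f : ℝ → ℝ) (hf : ContinuousOn f (spectrum ℝ (ℜ c : A) ∪ spectrum ℝ (ℑ c : A)))
    (hmono : MonotoneOn f (spectrum ℝ (ℜ c : A) ∪ spectrum ℝ (ℑ c : A))) :
    cfc f (ℜ c : A) ≤ cfc f (ℑ c : A) := by
  have hf_re := hf.mono subset_union_left
  have hf_im := hf.mono subset_union_right
  rw [← cfc_comp_re f c hf_re, ← cfc_comp_im f c hf_im]
  refine cfc_mono (fun z hz ↦ ?_) ?_ ?_
  · have hre : z.re ∈ spectrum ℝ (ℜ c : A) := spectrum_realPart' c ▸ mem_image_of_mem _ hz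
    have him : z.im ∈ spectrum ℝ (ℑ c : A) := spectrum_imaginaryPart' c ▸ mem_image_of_mem _ hz
    exact_mod_cast hmono (.inl hre) (.inr him) (re_le_im_of_realPart_le_imaginaryPart h hz)
  · rw [spectrum_realPart' c] at hf_re
    exact continuous_ofReal.comp_continuousOn (hf_re.comp (by fun_prop) (mapsTo_image _ _))
  · rw [spectrum_imaginaryPart' c] at hf_im
    exact continuous_ofReal.comp_continuousOn (hf_im.comp (by fun_prop) (mapsTo_image _ _))

end

theorem stmt9 {A : Type*} [CStarAlgebra A] [PartialOrder A] [StarOrderedRing A]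
    (a b : A) (ha : IsSelfAdjoint a) (hb : IsSelfAdjoint b)
    (hcomm : a * b = b * a) (hle : a ≤ b) (f : ℝ → ℝ)
    (hf : ContinuousOn f (spectrum ℝ a ∪ spectrum ℝ b))
    (hmono : MonotoneOn f (spectrum ℝ a ∪ spectrum ℝ b)) :
    cfc f a ≤ cfc f b := by
  obtain ⟨c, _, rfl, rfl⟩ :
      ∃ c : A, IsStarNormal c ∧ (realPart c : A) = a ∧ (imaginaryPart c : A) = b :=
    ⟨a + Complex.I • b, ha.isStarNormal_add_I_smul hb hcomm, realPart_add_I_smul ha hb,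
      imaginaryPart_add_I_smul ha hb⟩
  exact cfc_realPart_le_cfc_imaginaryPart hle f hf hmono
end

section
/- Let r ≥ 2 and let 𝔄 be a unital C*-algebra generated as a unital C*-algebra by projections p_1, …, p_r such that p_{i_1} p_{i_2} ⋯ p_{i_k} = 0 for every finite sequence of (not necessarily distinct) indices i_1, …, i_k with {i_1, …, i_k} = {1, …, r}. Then for every irreducible representation π of 𝔄 on a nonzero complex Hilbert space K, there exists an index i ∈ {1, …, r} such that π(p_i) = 0. -/
/-!
Among the words in the `π (p i)` that do not vanish (the empty word is one, as `K ≠ 0`), pick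
one, `P`, whose set of letters `S` is maximal; by hypothesis `S` misses some index `j`. The closed
span `M` of the vectors `w (P x)`, `w` a word in the letters of `S`, is invariant under `π (p i)`
for `i ∈ S`, and is killed by `π (p i)` for `i ∉ S` by maximality of `S`. As the `p i` are
self-adjoint and generate `A`, `M` is invariant under all of `π A`; it contains the range of
`P ≠ 0`, so `M = K` by irreducibility, whence `π (p j) = 0`.
-/

open Set
open scoped CStarAlgebra

section Words

variable {ι R : Type*} [MonoidWithZero R] (q : ι → R)

theorem exists_prod_ne_zero_forall_notMem_mul_prod_eq_zero [Finite ι] [Nontrivial R] :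
    ∃ l : List ι, (l.map q).prod ≠ 0 ∧ ∀ i ∉ l, ∀ w : List ι, (∀ k ∈ w, k ∈ l) →
      q i * ((w.map q).prod * (l.map q).prod) = 0 := by
  obtain ⟨l, hl, hmax⟩ := exists_maximalFor_of_wellFoundedGT
    (fun l : List ι => (l.map q).prod ≠ 0) (fun l => {i | i ∈ l}) ⟨[], by simp⟩
  refine ⟨l, hl, fun i hi w hw => ?_⟩
  by_contra hne
  have hsub : {k | k ∈ l} ⊆ {k | k ∈ i :: (w ++ l)} := fun k hk => by simp_all
  exact hi (hmax (by simpa [mul_assoc] using hne) hsub (by simp))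

end Words

section ClosedWordSpan

variable {ι 𝕜 E : Type*} [NormedField 𝕜] [NormedAddCommGroup E] [NormedSpace 𝕜 E]
  (q : ι → E →L[𝕜] E) (S : Set ι) (T : E →L[𝕜] E)

def closedWordSpan : Submodule 𝕜 E :=
  (Submodule.span 𝕜
    {y | ∃ w : List ι, (∀ k ∈ w, k ∈ S) ∧ ∃ x, (w.map q).prod (T x) = y}).topologicalClosure

theorem apply_mem_closedWordSpan (x : E) : T x ∈ closedWordSpan q S T :=
  Submodule.le_topologicalClosure _ (Submodule.subset_span ⟨[], by simp, x, by simp⟩)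

theorem isClosed_closedWordSpan : IsClosed (closedWordSpan q S T : Set E) :=
  Submodule.isClosed_topologicalClosure _

variable {q S T}

theorem mapsTo_closedWordSpan {i : ι} (hi : i ∈ S) :
    MapsTo (q i) (closedWordSpan q S T) (closedWordSpan q S T) := by
  refine Submodule.topologicalClosure_mem_invtSubmodule (Submodule.span_le.mpr ?_)
  rintro _ ⟨w, hw, x, rfl⟩
  refine Submodule.subset_span ⟨i :: w, ?_, x, by simp⟩
  simpa [hi] using hw

theorem apply_eq_zero_of_mem_closedWordSpan {i : ι}
    (h : ∀ w : List ι, (∀ k ∈ w, k ∈ S) → q i * ((w.map q).prod * T) = 0) {x : E}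
    (hx : x ∈ closedWordSpan q S T) : q i x = 0 := by
  suffices closedWordSpan q S T ≤ LinearMap.ker (q i : E →ₗ[𝕜] E) from this hx
  refine Submodule.topologicalClosure_minimal _ (Submodule.span_le.mpr ?_) (q i).isClosed_ker
  rintro _ ⟨w, hw, x, rfl⟩
  simpa using congr($(h w hw) x)

end ClosedWordSpan

section Stabilizer

variable {𝕜 E : Type*} [NontriviallyNormedField 𝕜] [NormedAddCommGroup E] [NormedSpace 𝕜 E]

def Submodule.stabilizerAlgebra (M : Submodule 𝕜 E) : Subalgebra 𝕜 (E →L[𝕜] E) where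
  carrier := {T | MapsTo T M M}
  mul_mem' hS hT := hS.comp hT
  add_mem' hS hT _ hx := M.add_mem (hS hx) (hT hx)
  algebraMap_mem' c _ hx := by simpa [Algebra.algebraMap_eq_smul_one] using M.smul_mem c hx

theorem Submodule.isClosed_stabilizerAlgebra {M : Submodule 𝕜 E} (hM : IsClosed (M : Set E)) :
    IsClosed (M.stabilizerAlgebra : Set (E →L[𝕜] E)) := by
  have : (M.stabilizerAlgebra : Set (E →L[𝕜] E)) = ⋂ x ∈ M, (fun T => T x) ⁻¹' M := by
    ext T; simp [MapsTo, Submodule.stabilizerAlgebra]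
  rw [this]
  exact isClosed_biInter fun x _ => hM.preimage (ContinuousLinearMap.apply 𝕜 E x).continuous

end Stabilizer

theorem mapsTo_of_topologicalClosure_adjoin_eq_top {A H : Type*} [CStarAlgebra A]
    [NormedAddCommGroup H] [InnerProductSpace ℂ H] [CompleteSpace H]
    (π : A →⋆ₐ[ℂ] (H →L[ℂ] H)) {s : Set A}
    (hgen : (StarAlgebra.adjoin ℂ s).topologicalClosure = ⊤) {M : Submodule ℂ H}
    (hM : IsClosed (M : Set H)) (hinv : ∀ a ∈ s, MapsTo (π a) M M)
    (hinv_star : ∀ a ∈ s, MapsTo (π (star a)) M M) (a : A) : MapsTo (π a) M M := by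
  let B : Subalgebra ℂ A := M.stabilizerAlgebra.comap (π : A →ₐ[ℂ] (H →L[ℂ] H))
  have hB : IsClosed (B : Set A) :=
    (Submodule.isClosed_stabilizerAlgebra hM).preimage (map_continuous π)
  have hadj : (StarAlgebra.adjoin ℂ s : Set A) ⊆ B := by
    rw [← StarSubalgebra.coe_toSubalgebra, StarAlgebra.adjoin_toSubalgebra]
    refine Algebra.adjoin_le (union_subset hinv ?_)
    intro b hb
    have := hinv_star (star b) hb
    rwa [star_star] at this
  have ha : a ∈ closure (StarAlgebra.adjoin ℂ s : Set A) := by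
    rw [← StarSubalgebra.topologicalClosure_coe, hgen]; trivial
  exact closure_minimal hadj hB ha

theorem stmt13_general {A : Type*} [CStarAlgebra A]
    {r : ℕ} (p : Fin r → A)
    -- the `p i` are projections
    (hproj : ∀ i, IsSelfAdjoint (p i) ∧ IsIdempotentElem (p i))
    -- which generate `A` as a unital C*-algebra
    (hgen : (StarAlgebra.adjoin ℂ (Set.range p)).topologicalClosure = ⊤)
    -- any product of the `p i` containing each of them at least once vanishes
    (hprod : ∀ l : List (Fin r), (∀ i, i ∈ l) → (l.map p).prod = 0)
    -- an irreducible representation `π` on a nonzero complex Hilbert space `K`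
    (K : Type*) [NormedAddCommGroup K] [InnerProductSpace ℂ K] [CompleteSpace K]
    [Nontrivial K] (π : A →⋆ₐ[ℂ] (K →L[ℂ] K))
    (hirred : ∀ S : Submodule ℂ K, IsClosed (S : Set K) →
      (∀ a : A, ∀ x ∈ S, π a x ∈ S) → S = ⊥ ∨ S = ⊤) :
    ∃ i, π (p i) = 0 := by
  set q : Fin r → (K →L[ℂ] K) := fun i => π (p i)
  obtain ⟨l, hl, hkill⟩ := exists_prod_ne_zero_forall_notMem_mul_prod_eq_zero q
  obtain ⟨j, hj⟩ : ∃ j, j ∉ l := by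
    by_contra! hall
    have hlπ : (l.map q).prod = π (l.map p).prod := by rw [map_list_prod, List.map_map]; rfl
    exact hl (by rw [hlπ, hprod l hall, map_zero])
  set M := closedWordSpan q {k | k ∈ l} (l.map q).prod
  have hinv : ∀ i, MapsTo (q i) M M := fun i => by
    by_cases hi : i ∈ l
    · exact mapsTo_closedWordSpan hi
    · intro x hx
      rw [apply_eq_zero_of_mem_closedWordSpan (hkill i hi) hx]
      exact M.zero_mem
  have hinvA : ∀ a, MapsTo (π a) M M :=
    mapsTo_of_topologicalClosure_adjoin_eq_top π hgen (isClosed_closedWordSpan ..)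
      (forall_mem_range.2 hinv)
      (forall_mem_range.2 fun i => by rw [(hproj i).1.star_eq]; exact hinv i)
  have hM : M ≠ ⊥ := fun hbot => hl <| ContinuousLinearMap.ext fun x => by
    have hx : (l.map q).prod x ∈ M := apply_mem_closedWordSpan q {k | k ∈ l} _ x
    simpa [hbot] using hx
  have hMtop : M = ⊤ :=
    (hirred M (isClosed_closedWordSpan ..) fun a _ hx => hinvA a hx).resolve_left hM
  refine ⟨j, ContinuousLinearMap.ext fun x => ?_⟩
  have hx : x ∈ M := hMtop ▸ Submodule.mem_top
  exact apply_eq_zero_of_mem_closedWordSpan (hkill j hj) hx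

theorem stmt13 {A : Type*} [CStarAlgebra A]
    {r : ℕ} (hr : 2 ≤ r) (p : Fin r → A)
    -- the `p i` are projections
    (hproj : ∀ i, IsSelfAdjoint (p i) ∧ IsIdempotentElem (p i))
    -- which generate `A` as a unital C*-algebra
    (hgen : (StarAlgebra.adjoin ℂ (Set.range p)).topologicalClosure = ⊤)
    -- any product of the `p i` containing each of them at least once vanishes
    (hprod : ∀ l : List (Fin r), (∀ i, i ∈ l) → (l.map p).prod = 0)
    -- an irreducible representation `π` on a nonzero complex Hilbert space `K`
    (K : Type*) [NormedAddCommGroup K] [InnerProductSpace ℂ K] [CompleteSpace K]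
    [Nontrivial K] (π : A →⋆ₐ[ℂ] (K →L[ℂ] K))
    (hirred : ∀ S : Submodule ℂ K, IsClosed (S : Set K) →
      (∀ a : A, ∀ x ∈ S, π a x ∈ S) → S = ⊥ ∨ S = ⊤) :
    ∃ i, π (p i) = 0 :=
  stmt13_general p hproj hgen hprod K π hirred
end
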